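/- Let g and k be two different jobs with x_{g1} > 0 and x_{k2} > 0, let I_k be a column of type (∗, k̄ ; ∗) (its matching matches k to no machine of G1) and I_g a column of type (∗ ; ∗, ḡ) (its matching matches g to no machine of G2). If I_k and I_g are both in d(y,w) and ε_r(g,k) > 0, then I_k is of type (∗ ; ∗, k, g) (both k and g are matched to machines of G2 in M_{I_k}), I_g is of type (∗, k, g ; ∗) (both k and g are matched to machines of G1 in M_{I_g}), and k and g belong to the same connected component of the bipartite multigraph G(I_g, I_k) whose edge multiset is M_{I_g} ∪ M_{I_k}. -/

import Mathlib

/-!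
Call `f : M → J` a shift direction (`IsShiftDirection`) if it uses only edges of `G`, covers
every d-tight job, is injective on `G1` and on `G2`, and sends no machine of `G1` to `k` and no
machine of `G2` to `g`. Lowering `y` along `f`, `x_{g1}`, `x_{k2}`, `r` and `w` by a small
`δ > 0` keeps `ℓp` feasible (`ε_r(g,k) > 0` leaves room in `x_{j1} + x_{j2} ≤ r` for fractional
`j`, and `ε < 1` for integral `j`), against the minimality of `r`. So there is no shift direction,
and each claim follows by exhibiting one if it failed:
* `M_{I_k}` itself, unless it matches `g` into `G2`;
* if `k` and `g` lie in different components of `G(I_g, I_k)`: `M_{I_g}` on the component of `g`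
  and `M_{I_k}` elsewhere;
* if `M_{I_k}` does not match `k` at all, the component of `k` is a path leaving `k` through its
  `G1`-machine in `M_{I_g}` and reaching `g` from its `G2`-machine in `M_{I_k}`: `M_{I_k}` up to
  the first passage from a `G1`-machine to a `G2`-machine and `M_{I_g}` after it.

The remaining claims follow by exchanging `(G1, g, I_g)` with `(G2, k, I_k)`.
-/

open Finset

noncomputable section

/-- Feasibility for system `S`. -/
def FeasibleS {J M : Type*} [Fintype J] [Fintype M]
    (G1 G2 : Finset M) (b : J → M → ℕ) (a1 a2 : J → ℕ)
    (y : J → M → ℝ) (x1 x2 : J → ℝ) (r w : ℝ) : Prop :=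
  (∀ h ∈ G1, ((∑ j, (b j h : ℝ)) - ((∑ j, (a2 j : ℝ)) - r) ≤ (∑ j, y j h)) ∧
    ((∑ j, y j h) ≤ w)) ∧
  (∀ h ∈ G2, ((∑ j, (b j h : ℝ)) - ((∑ j, (a1 j : ℝ)) - r) ≤ (∑ j, y j h)) ∧
    ((∑ j, y j h) ≤ w)) ∧
  (∀ j, (∑ h, y j h) ≤ w) ∧
  (∀ j, ∀ h, 0 ≤ y j h ∧ y j h ≤ (b j h : ℝ)) ∧
  ((∑ j, x1 j) = r) ∧ ((∑ j, x2 j) = r) ∧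
  (∀ j, x1 j + x2 j ≤ r) ∧
  (∀ j, 0 ≤ x1 j ∧ x1 j ≤ (a1 j : ℝ)) ∧
  (∀ j, 0 ≤ x2 j ∧ x2 j ≤ (a2 j : ℝ)) ∧
  (∀ j, (∑ h ∈ G1, ((b j h : ℝ) - y j h)) + (a2 j : ℝ) - x2 j ≤ (∑ j', (a2 j' : ℝ)) - r) ∧
  (∀ j, (∑ h ∈ G2, ((b j h : ℝ) - y j h)) + (a1 j : ℝ) - x1 j ≤ (∑ j', (a1 j' : ℝ)) - r)

/-- Feasibility for the linear program `ℓp` associated with an optimal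
LP-relaxation value `(rstar, wstar)`. -/
def FeasibleLP {J M : Type*} [Fintype J] [Fintype M]
    (G1 G2 : Finset M) (b : J → M → ℕ) (a1 a2 : J → ℕ)
    (rstar wstar : ℝ)
    (y : J → M → ℝ) (x1 x2 : J → ℝ) (r w : ℝ) : Prop :=
  FeasibleS G1 G2 b a1 a2 y x1 x2 r w ∧
  w - r = (⌈wstar - rstar⌉ : ℝ) ∧ ((⌊rstar⌋ : ℝ) ≤ r)

/-- The quantity `ε_r(g,k)`. -/
def epsR {J : Type*} [DecidableEq J] (B1 B2 : Finset J) (x1 x2 : J → ℝ)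
    (r ε : ℝ) (g k : J) : ℝ :=
  if hne : ((B1 ∪ B2) \ {g, k}).Nonempty then
    min (((B1 ∪ B2) \ {g, k}).inf' hne (fun j => r - (x1 j + x2 j))) ε
  else ε

/-- The slack `ε_a(g)`. -/
def epsA {J M : Type*} [Fintype J] (G2 : Finset M) (b : J → M → ℕ) (a1 : J → ℕ)
    (y : J → M → ℝ) (x1 : J → ℝ) (r : ℝ) (g : J) : ℝ :=
  (∑ h ∈ G2, y g h) -
    ((∑ h ∈ G2, (b g h : ℝ)) + (a1 g : ℝ) - x1 g - (∑ j, (a1 j : ℝ)) + r)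

/-- The slack `ε_c(k)`. -/
def epsC {J M : Type*} [Fintype J] (G1 : Finset M) (b : J → M → ℕ) (a2 : J → ℕ)
    (y : J → M → ℝ) (x2 : J → ℝ) (r : ℝ) (k : J) : ℝ :=
  (∑ h ∈ G1, y k h) -
    ((∑ h ∈ G1, (b k h : ℝ)) + (a2 k : ℝ) - x2 k - (∑ j, (a2 j : ℝ)) + r)

/-- A column matching: a matching of all machines to distinct jobs, using only
edges of the graph `G` (i.e. pairs with `y j h > 0`), and covering every
`d`-tight job (every job `j` with `∑ h, y j h = w`). -/
def IsColumn {J M : Type*} [Fintype M] (y : J → M → ℝ) (w : ℝ) (f : M → J) : Prop :=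
  Function.Injective f ∧ (∀ h, 0 < y (f h) h) ∧
  (∀ j, ((∑ h, y j h) = w) → ∃ h, f h = j)

/-- `cols` together with multiplicities `mult` is a representation `d(y,w)` of the
part (d) of the solution as a set of columns. -/
def IsColRep {J M : Type*} [Fintype J] [Fintype M] [DecidableEq J]
    (y : J → M → ℝ) (w : ℝ) (cols : Finset (M → J)) (mult : (M → J) → ℝ) : Prop :=
  (∀ f ∈ cols, IsColumn y w f ∧ 0 < mult f) ∧
  ((∑ f ∈ cols, mult f) = w) ∧
  (∀ j, ∀ h, y j h = ∑ f ∈ cols, if f h = j then mult f else 0)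


open Relation

namespace Relation.ReflTransGen

variable {α : Type*} {r : α → α → Prop} {a b c x : α}

theorem of_unique_pred_of_ne (huniq : ∀ a b c, r a c → r b c → a = b)
    (hxc : ReflTransGen r x c) (hne : c ≠ x) (hbc : r b c) : ReflTransGen r x b := by
  obtain rfl | ⟨p, hxp, hpc⟩ := hxc.cases_tail
  · exact absurd rfl hne
  · rwa [huniq _ _ _ hbc hpc]

theorem of_unique_succ_of_ne (huniq : ∀ a b c, r a b → r a c → b = c)
    (hax : ReflTransGen r a x) (hne : a ≠ x) (hab : r a b) : ReflTransGen r b x := by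
  obtain rfl | ⟨s, has, hsx⟩ := hax.cases_head
  · exact absurd rfl hne
  · rwa [huniq _ _ _ hab has]

theorem of_symmGen_of_unique_pred (huniq : ∀ a b c, r a c → r b c → a = b)
    (hsrc : ∀ a, ¬ r a x) (h : ReflTransGen (SymmGen r) x b) : ReflTransGen r x b := by
  induction h with
  | refl => rfl
  | tail _ hbc ih =>
    rcases hbc with hbc | hcb
    · exact ih.tail hbc
    · exact ih.of_unique_pred_of_ne huniq (by rintro rfl; exact hsrc _ hcb) hcb

theorem exists_rel_of_not {p : α → Prop} (h : ReflTransGen r a b) (ha : p a) (hb : ¬ p b) :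
    ∃ c d, p c ∧ ¬ p d ∧ r c d ∧ ReflTransGen r d b := by
  induction h using head_induction_on with
  | refl => exact absurd ha hb
  | head hac hcb ih =>
    rename_i a c
    by_cases hc : p c
    · exact ih hc
    · exact ⟨a, c, ha, hc, hac, hcb⟩

end Relation.ReflTransGen

theorem Set.injOn_piecewise_of_injective {α β : Type*} {s t : Set α} [DecidablePred (· ∈ s)]
    {f g : α → β} (hf : Function.Injective f) (hg : Function.Injective g)
    (hfg : ∀ a ∈ t, ∀ b ∈ t, a ∈ s → b ∉ s → f a ≠ g b) : Set.InjOn (s.piecewise f g) t := by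
  intro a ha b hb he
  by_cases has : a ∈ s <;> by_cases hbs : b ∈ s <;>
    simp only [Set.piecewise_eq_of_mem, Set.piecewise_eq_of_notMem, has, hbs,
      not_false_eq_true] at he
  · exact hf he
  · exact absurd he (hfg a ha b hb has hbs)
  · exact absurd he.symm (hfg b hb a ha hbs has)
  · exact hg he

section EpsR

variable {J : Type*} [DecidableEq J] {B1 B2 : Finset J} {x1 x2 : J → ℝ} {r ε δ rstar : ℝ}
  {g k : J}

theorem epsR_le : epsR B1 B2 x1 x2 r ε g k ≤ ε := by
  unfold epsR
  split_ifs
  exacts [min_le_right _ _, le_rfl]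

theorem epsR_le_of_mem {j : J} (hj : j ∈ (B1 ∪ B2) \ {g, k}) :
    epsR B1 B2 x1 x2 r ε g k ≤ r - (x1 j + x2 j) := by
  rw [epsR, dif_pos ⟨j, hj⟩]
  exact (min_le_left _ _).trans (inf'_le _ hj)

theorem sub_pi_single_add_sub_pi_single_le (hxr : ∀ j, x1 j + x2 j ≤ r) (hε1 : ε < 1)
    (hrε : r = (⌊rstar⌋ : ℝ) + ε)
    (hB1 : ∀ j, j ∈ B1 ↔ ¬∃ z : ℤ, x1 j = (z : ℝ))
    (hB2 : ∀ j, j ∈ B2 ↔ ¬∃ z : ℤ, x2 j = (z : ℝ))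
    (hgk : g ≠ k) (hδ : δ ≤ epsR B1 B2 x1 x2 r ε g k) (j : J) :
    (x1 - Pi.single g δ : J → ℝ) j + (x2 - Pi.single k δ : J → ℝ) j ≤ r - δ := by
  simp only [Pi.sub_apply]
  by_cases hjg : j = g
  · subst hjg
    rw [Pi.single_eq_same, Pi.single_eq_of_ne hgk]
    linarith [hxr j]
  by_cases hjk : j = k
  · subst hjk
    rw [Pi.single_eq_same, Pi.single_eq_of_ne hjg]
    linarith [hxr j]
  rw [Pi.single_eq_of_ne hjg, Pi.single_eq_of_ne hjk]
  by_cases hj : j ∈ B1 ∪ B2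
  · have hj' : j ∈ (B1 ∪ B2) \ {g, k} := mem_sdiff.2 ⟨hj, by simp [hjg, hjk]⟩
    linarith [epsR_le_of_mem (x1 := x1) (x2 := x2) (r := r) (ε := ε) hj']
  obtain ⟨z1, hz1⟩ : ∃ z : ℤ, x1 j = z := by
    simpa [hB1] using fun h => hj (mem_union_left _ h)
  obtain ⟨z2, hz2⟩ : ∃ z : ℤ, x2 j = z := by
    simpa [hB2] using fun h => hj (mem_union_right _ h)
  have hz : z1 + z2 ≤ ⌊rstar⌋ := by
    rw [← Int.lt_add_one_iff, ← Int.cast_lt (R := ℝ)]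
    push_cast
    linarith [hxr j]
  have hz' : (z1 : ℝ) + z2 ≤ ⌊rstar⌋ := by exact_mod_cast hz
  linarith [hδ.trans epsR_le]

end EpsR

structure IsShiftDirection {J M : Type*} [Fintype M] (y : J → M → ℝ) (w : ℝ) (G1 G2 : Finset M)
    (g k : J) (f : M → J) : Prop where
  pos : ∀ h, 0 < y (f h) h
  covers_tight : ∀ j, ∑ h, y j h = w → ∃ h, f h = j
  injOn_left : Set.InjOn f G1
  injOn_right : Set.InjOn f G2
  ne_left : ∀ h ∈ G1, f h ≠ k
  ne_right : ∀ h ∈ G2, f h ≠ g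

theorem IsShiftDirection.symm {J M : Type*} [Fintype M] {y : J → M → ℝ} {w : ℝ}
    {G1 G2 : Finset M} {g k : J} {f : M → J} (hf : IsShiftDirection y w G1 G2 g k f) :
    IsShiftDirection y w G2 G1 k g f :=
  ⟨hf.pos, hf.covers_tight, hf.injOn_right, hf.injOn_left, hf.ne_right, hf.ne_left⟩

section PiSingle

variable {J M : Type*} [DecidableEq J] {f : M → J} {δ : ℝ}

theorem sum_pi_single_le {s : Finset M} (hf : Set.InjOn f s) (hδ : 0 ≤ δ) (j : J) :
    ∑ h ∈ s, (Pi.single (f h) δ : J → ℝ) j ≤ δ := by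
  simp only [Pi.single_apply]
  rw [← sum_filter, sum_const, nsmul_eq_mul]
  have hcard : #{h ∈ s | j = f h} ≤ 1 := card_le_one.2 fun a ha b hb =>
    hf (mem_filter.1 ha).1 (mem_filter.1 hb).1
      ((mem_filter.1 ha).2.symm.trans (mem_filter.1 hb).2)
  exact mul_le_of_le_one_left hδ (by exact_mod_cast hcard)

theorem sum_pi_single_add_le {s : Finset M} {j₀ : J} (hf : Set.InjOn f s)
    (hj₀ : ∀ h ∈ s, f h ≠ j₀) (hδ : 0 ≤ δ) (j : J) :
    ∑ h ∈ s, (Pi.single (f h) δ : J → ℝ) j + (Pi.single j₀ δ : J → ℝ) j ≤ δ := by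
  by_cases hj : j = j₀
  · subst hj
    rw [sum_eq_zero fun h hh => Pi.single_eq_of_ne (hj₀ h hh).symm _, Pi.single_eq_same,
      zero_add]
  · rw [Pi.single_eq_of_ne hj, add_zero]
    exact sum_pi_single_le hf hδ j

theorem sub_pi_single_mem_Icc {u c : J → ℝ} {i : J} (hu : ∀ j, u j ∈ Set.Icc 0 (c j))
    (hδ : 0 ≤ δ) (hδi : δ ≤ u i) (j : J) : u j - (Pi.single i δ : J → ℝ) j ∈ Set.Icc 0 (c j) := by
  rw [Pi.single_apply, Set.mem_Icc]
  split_ifs with hj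
  · subst hj
    constructor <;> linarith [(hu j).1, (hu j).2]
  · simpa using hu j

theorem sum_sub_pi_single_le [Fintype M] {y : J → M → ℝ} {w : ℝ} {j : J}
    (hjob : ∑ h, y j h ≤ w) (hδw : (∀ h, f h ≠ j) → ∑ h, y j h ≤ w - δ) (hδ : 0 ≤ δ) :
    ∑ h, (y j h - (Pi.single (f h) δ : J → ℝ) j) ≤ w - δ := by
  have hsingle (h : M) : 0 ≤ (Pi.single (f h) δ : J → ℝ) j := by
    rw [Pi.single_apply]
    split_ifs <;> linarith
  rw [sum_sub_distrib]
  by_cases hj : ∃ h, f h = j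
  · obtain ⟨h0, rfl⟩ := hj
    have := single_le_sum (fun h _ => hsingle h) (mem_univ h0)
    rw [Pi.single_eq_same] at this
    linarith
  · linarith [hδw (not_exists.1 hj), sum_nonneg fun h (_ : h ∈ univ) => hsingle h]

end PiSingle

section Shift

variable {J M : Type*} [Fintype J] [Fintype M] [DecidableEq J] {G1 G2 : Finset M}
  {b : J → M → ℕ} {a1 a2 : J → ℕ} {rstar wstar : ℝ} {y : J → M → ℝ} {x1 x2 : J → ℝ}
  {r w ε δ : ℝ} {B1 B2 : Finset J} {g k : J} {f : M → J}

theorem FeasibleLP.shift (hfeas : FeasibleLP G1 G2 b a1 a2 rstar wstar y x1 x2 r w)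
    (hε1 : ε < 1) (hrε : r = (⌊rstar⌋ : ℝ) + ε)
    (hB1 : ∀ j, j ∈ B1 ↔ ¬∃ z : ℤ, x1 j = (z : ℝ))
    (hB2 : ∀ j, j ∈ B2 ↔ ¬∃ z : ℤ, x2 j = (z : ℝ))
    (hgk : g ≠ k) (hf : IsShiftDirection y w G1 G2 g k f)
    (hδ0 : 0 < δ) (hδR : δ ≤ epsR B1 B2 x1 x2 r ε g k) (hδg : δ ≤ x1 g) (hδk : δ ≤ x2 k)
    (hδy : ∀ h, δ ≤ y (f h) h) (hδw : ∀ j, (∀ h, f h ≠ j) → ∑ h, y j h ≤ w - δ) :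
    FeasibleLP G1 G2 b a1 a2 rstar wstar (fun j h => y j h - (Pi.single (f h) δ : J → ℝ) j)
      (x1 - Pi.single g δ) (x2 - Pi.single k δ) (r - δ) (w - δ) := by
  obtain ⟨⟨hG1, hG2, hjob, hy, hx1sum, hx2sum, hxr, hx1, hx2, hcon2, hcon1⟩, hwr, hfloor⟩ :=
    hfeas
  have hmachine (h : M) : ∑ j, (y j h - (Pi.single (f h) δ : J → ℝ) j) = ∑ j, y j h - δ := by
    rw [sum_sub_distrib, Fintype.sum_pi_single']
  have hgroup (s : Finset M) (j : J) :
      ∑ h ∈ s, ((b j h : ℝ) - (y j h - (Pi.single (f h) δ : J → ℝ) j)) =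
        ∑ h ∈ s, ((b j h : ℝ) - y j h) + ∑ h ∈ s, (Pi.single (f h) δ : J → ℝ) j := by
    rw [← sum_add_distrib]
    exact sum_congr rfl fun _ _ => by ring
  refine ⟨⟨fun h hh => ?_, fun h hh => ?_, fun j => sum_sub_pi_single_le (hjob j) (hδw j) hδ0.le,
    fun j h => sub_pi_single_mem_Icc (fun j => hy j h) hδ0.le (hδy h) j, ?_, ?_,
    sub_pi_single_add_sub_pi_single_le hxr hε1 hrε hB1 hB2 hgk hδR,
    sub_pi_single_mem_Icc hx1 hδ0.le hδg, sub_pi_single_mem_Icc hx2 hδ0.le hδk,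
    fun j => ?_, fun j => ?_⟩, by linarith, by linarith [hδR.trans epsR_le]⟩
  · rw [hmachine]
    constructor <;> linarith [hG1 h hh]
  · rw [hmachine]
    constructor <;> linarith [hG2 h hh]
  · simp only [Pi.sub_apply]
    rw [sum_sub_distrib, Fintype.sum_pi_single', hx1sum]
  · simp only [Pi.sub_apply]
    rw [sum_sub_distrib, Fintype.sum_pi_single', hx2sum]
  · rw [Pi.sub_apply, hgroup]
    linarith [hcon2 j, sum_pi_single_add_le hf.injOn_left hf.ne_left hδ0.le j]
  · rw [Pi.sub_apply, hgroup]
    linarith [hcon1 j, sum_pi_single_add_le hf.injOn_right hf.ne_right hδ0.le j]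

end Shift

section NoShift

open Filter Topology

variable {J M : Type*} [Fintype J] [Fintype M] [DecidableEq J] {G1 G2 : Finset M}
  {b : J → M → ℕ} {a1 a2 : J → ℕ} {rstar wstar : ℝ} {y : J → M → ℝ} {x1 x2 : J → ℝ}
  {r w ε : ℝ} {B1 B2 : Finset J} {g k : J}

theorem eventually_le_of_pos {a : ℝ} (ha : 0 < a) : ∀ᶠ δ in 𝓝[>] (0 : ℝ), δ ≤ a :=
  (eventually_le_nhds ha).filter_mono nhdsWithin_le_nhds

theorem not_isShiftDirection (hfeas : FeasibleLP G1 G2 b a1 a2 rstar wstar y x1 x2 r w)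
    (hopt : ∀ y' x1' x2' r' w',
      FeasibleLP G1 G2 b a1 a2 rstar wstar y' x1' x2' r' w' → r ≤ r')
    (hε1 : ε < 1) (hrε : r = (⌊rstar⌋ : ℝ) + ε)
    (hB1 : ∀ j, j ∈ B1 ↔ ¬∃ z : ℤ, x1 j = (z : ℝ))
    (hB2 : ∀ j, j ∈ B2 ↔ ¬∃ z : ℤ, x2 j = (z : ℝ))
    (hgk : g ≠ k) (hxg : 0 < x1 g) (hxk : 0 < x2 k) (hepsr : 0 < epsR B1 B2 x1 x2 r ε g k)
    (f : M → J) : ¬ IsShiftDirection y w G1 G2 g k f := by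
  intro hf
  have hslack (j : {j // ∀ h, f h ≠ j}) : 0 < w - ∑ h, y j h := by
    refine sub_pos.2 ((hfeas.1.2.2.1 j : ∑ h, y j h ≤ w).lt_of_ne fun he => ?_)
    obtain ⟨h, hh⟩ := hf.covers_tight j he
    exact j.2 h hh
  obtain ⟨δ, hδ0 : 0 < δ, hδR, hδg, hδk, hδy, hδw⟩ :=
    (eventually_mem_nhdsWithin.and <| (eventually_le_of_pos hepsr).and <|
      (eventually_le_of_pos hxg).and <| (eventually_le_of_pos hxk).and <|
      (eventually_all.2 fun h => eventually_le_of_pos (hf.pos h)).and <|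
      eventually_all.2 fun j => eventually_le_of_pos (hslack j)).exists
  have := hopt _ _ _ _ _ (hfeas.shift hε1 hrε hB1 hB2 hgk hf hδ0 hδR hδg hδk hδy
    fun j hj => by linarith [hδw ⟨j, hj⟩])
  linarith

end NoShift

section Columns

variable {J M : Type*} [Fintype M] {y : J → M → ℝ} {w : ℝ} {G1 G2 : Finset M} {g k : J}
  {f fg fk : M → J}

theorem IsColumn.isShiftDirection (hf : IsColumn y w f) (hk : ∀ h ∈ G1, f h ≠ k)
    (hg : ∀ h ∈ G2, f h ≠ g) : IsShiftDirection y w G1 G2 g k f :=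
  ⟨hf.2.1, hf.2.2, hf.1.injOn, hf.1.injOn, hk, hg⟩

theorem IsColumn.isShiftDirection_piecewise (hfg : IsColumn y w fg) (hfk : IsColumn y w fk)
    (hfgg : ∀ h ∈ G2, fg h ≠ g) (hfkk : ∀ h ∈ G1, fk h ≠ k)
    {S : Set M} [DecidablePred (· ∈ S)]
    (hclosed : ∀ h h', h ∈ S → fk h = fg h' → h' ∈ S)
    (hmix1 : ∀ h ∈ G1, ∀ h' ∈ G1, h ∈ S → h' ∉ S → fg h ≠ fk h')
    (hmix2 : ∀ h ∈ G2, ∀ h' ∈ G2, h ∈ S → h' ∉ S → fg h ≠ fk h')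
    (hk : ∀ h ∈ S, fg h ≠ k) (hg : ∀ h, fk h = g → h ∈ S) :
    IsShiftDirection y w G1 G2 g k (S.piecewise fg fk) := by
  refine ⟨fun h => ?_, fun j hj => ?_, Set.injOn_piecewise_of_injective hfg.1 hfk.1 hmix1,
    Set.injOn_piecewise_of_injective hfg.1 hfk.1 hmix2,
    fun h hh => ?_, fun h hh => ?_⟩
  · by_cases hS : h ∈ S
    · simpa [hS] using hfg.2.1 h
    · simpa [hS] using hfk.2.1 h
  · obtain ⟨hk', rfl⟩ := hfk.2.2 j hj
    obtain ⟨hg', hg'k⟩ := hfg.2.2 _ hj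
    by_cases hS : hk' ∈ S
    · exact ⟨hg', by simp [hclosed hk' hg' hS hg'k.symm, hg'k]⟩
    · exact ⟨hk', by simp [hS]⟩
  · by_cases hS : h ∈ S
    · simpa [hS] using hk h hS
    · simpa [hS] using hfkk h hh
  · by_cases hS : h ∈ S
    · simpa [hS] using hfgg h hh
    · simpa [hS] using fun he => hS (hg h he)

theorem exists_right_eq_of_isColumn (hno : ∀ f, ¬ IsShiftDirection y w G1 G2 g k f)
    (hfk : IsColumn y w fk) (hfkk : ∀ h ∈ G1, fk h ≠ k) : ∃ h ∈ G2, fk h = g := by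
  by_contra! hfkg
  exact hno fk (hfk.isShiftDirection hfkk hfkg)

end Columns

section AltStep

variable {J M : Type*}

-- `SymmGen (altStep M_{I_g} M_{I_k})` is the adjacency of the multigraph `G(I_g, I_k)`.
def altStep (fg fk : M → J) : J ⊕ M → J ⊕ M → Prop
  | .inl j, .inr h => fg h = j
  | .inr h, .inl j => fk h = j
  | _, _ => False

variable {fg fk : M → J}

theorem altStep_inl_inr (h : M) : altStep fg fk (.inl (fg h)) (.inr h) := rfl

theorem altStep_inr_inl (h : M) : altStep fg fk (.inr h) (.inl (fk h)) := rfl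

theorem not_altStep_inl {k : J} (hk : ∀ h, fk h ≠ k) (v : J ⊕ M) :
    ¬ altStep fg fk v (.inl k) := by
  rcases v with _ | h
  · exact id
  · exact hk h

theorem altStep_unique_pred (hfk : Function.Injective fk) :
    ∀ a b c, altStep fg fk a c → altStep fg fk b c → a = b := by
  rintro (_ | _) (_ | _) (_ | _) hac hbc <;> simp only [altStep] at hac hbc <;> grind

theorem altStep_unique_succ (hfg : Function.Injective fg) :
    ∀ a b c, altStep fg fk a b → altStep fg fk a c → b = c := by
  rintro (_ | _) (_ | _) (_ | _) hab hac <;> simp only [altStep] at hab hac <;> grind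

theorem symmGen_altStep_iff {v v' : J ⊕ M} :
    SymmGen (altStep fg fk) v v' ↔ ∃ h : M,
      (v = .inl (fg h) ∧ v' = .inr h) ∨ (v = .inr h ∧ v' = .inl (fg h)) ∨
      (v = .inl (fk h) ∧ v' = .inr h) ∨ (v = .inr h ∧ v' = .inl (fk h)) := by
  rcases v with j | h <;> rcases v' with j' | h' <;> simp [SymmGen, altStep, eq_comm] <;> aesop

end AltStep

section TwoColumns

variable {J M : Type*} [Fintype M] {y : J → M → ℝ} {w : ℝ} {G1 G2 : Finset M} {g k : J}
  {fg fk : M → J}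

theorem reflTransGen_symmGen_altStep (hno : ∀ f, ¬ IsShiftDirection y w G1 G2 g k f)
    (hfg : IsColumn y w fg) (hfk : IsColumn y w fk)
    (hfgg : ∀ h ∈ G2, fg h ≠ g) (hfkk : ∀ h ∈ G1, fk h ≠ k) :
    ReflTransGen (SymmGen (altStep fg fk)) (.inl k) (.inl g) := by
  classical
  by_contra hkg
  let S : Set M := {h | ReflTransGen (SymmGen (altStep fg fk)) (.inl g) (.inr h)}
  have hfg_edge (h : M) : SymmGen (altStep fg fk) (.inr h) (.inl (fg h)) :=
    .of_rel_symm (altStep_inl_inr h)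
  have hfk_edge (h : M) : SymmGen (altStep fg fk) (.inr h) (.inl (fk h)) :=
    .of_rel (altStep_inr_inl h)
  have hmix (h h' : M) (hS : h ∈ S) (hS' : h' ∉ S) : fg h ≠ fk h' := fun he =>
    hS' ((hS.tail (hfg_edge h)).tail (he ▸ (hfk_edge h').symm))
  refine hno _ (hfg.isShiftDirection_piecewise hfk hfgg hfkk (S := S)
    (fun h h' hS he => (hS.tail (hfk_edge h)).tail (he ▸ (hfg_edge h').symm))
    (fun h _ h' _ => hmix h h') (fun h _ h' _ => hmix h h')
    (fun h hS he => hkg (Std.Symm.symm _ _ (he ▸ hS.tail (hfg_edge h))))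
    (fun h he => .single (he ▸ (hfk_edge h).symm)))

variable [DecidableEq M]

theorem exists_crossing_of_reflTransGen (hdisj : Disjoint G1 G2) (hcover : G1 ∪ G2 = univ)
    (hfg : Function.Injective fg) (hfk : Function.Injective fk) (hk : ∀ h, fk h ≠ k)
    (hfgk : ∃ h ∈ G1, fg h = k) (hfkg : ∃ h ∈ G2, fk h = g)
    (hkg : ReflTransGen (SymmGen (altStep fg fk)) (.inl k) (.inl g)) :
    ∃ hA ∈ G1, ∃ hB ∈ G2, fk hA = fg hB ∧
      ReflTransGen (altStep fg fk) (.inr hB) (.inl g) := by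
  obtain ⟨h1, h1G1, rfl⟩ := hfgk
  obtain ⟨h0, h0G2, rfl⟩ := hfkg
  have hpath : ReflTransGen (altStep fg fk) (.inl (fg h1)) (.inr h0) :=
    (hkg.of_symmGen_of_unique_pred (altStep_unique_pred hfk) (not_altStep_inl hk))
      |>.of_unique_pred_of_ne (altStep_unique_pred hfk) (by simpa using hk h0) (altStep_inr_inl h0)
  -- The path leaves `p` by a step from a `G1`-machine to a job that `fg` matches into `G2`.
  let p : J ⊕ M → Prop := Sum.elim (fun j => ∀ h ∈ G2, fg h ≠ j) (· ∉ G2)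
  have hp1 : p (.inl (fg h1)) := fun h hG2 he => disjoint_left.1 hdisj h1G1 (hfg he ▸ hG2)
  obtain ⟨c, d, hc, hd, hcd, hdb⟩ := hpath.exists_rel_of_not hp1 (by simpa [p] using h0G2)
  rcases c with j | hA <;> rcases d with j' | hB <;> simp only [altStep] at hcd
  · simp only [p, Sum.elim_inl, Sum.elim_inr, not_not] at hc hd
    exact absurd hcd (hc hB hd)
  · subst hcd
    simp only [p, Sum.elim_inl, Sum.elim_inr, not_forall, not_not, exists_prop] at hc hd
    obtain ⟨hB, hBG2, hAB⟩ := hd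
    have hAG1 : hA ∈ G1 := (mem_union.1 (by simp [hcover])).resolve_right hc
    refine ⟨hA, hAG1, hB, hBG2, hAB.symm, .tail ?_ (altStep_inr_inl h0)⟩
    exact hdb.of_unique_succ_of_ne (altStep_unique_succ hfg) (by simp) (hAB ▸ altStep_inl_inr hB)

theorem exists_right_eq_of_reflTransGen (hdisj : Disjoint G1 G2) (hcover : G1 ∪ G2 = univ)
    (hno : ∀ f, ¬ IsShiftDirection y w G1 G2 g k f)
    (hfg : IsColumn y w fg) (hfk : IsColumn y w fk)
    (hfgg : ∀ h ∈ G2, fg h ≠ g) (hfkk : ∀ h ∈ G1, fk h ≠ k)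
    (hfgk : ∃ h ∈ G1, fg h = k) (hfkg : ∃ h ∈ G2, fk h = g)
    (hkg : ReflTransGen (SymmGen (altStep fg fk)) (.inl k) (.inl g)) :
    ∃ h ∈ G2, fk h = k := by
  classical
  by_contra! hfkk'
  have hk (h : M) : fk h ≠ k := (mem_union.1 (by simp [hcover])).elim (hfkk h) (hfkk' h)
  obtain ⟨hA, hAG1, hB, hBG2, hAB, hBg⟩ :=
    exists_crossing_of_reflTransGen hdisj hcover hfg.1 hfk.1 hk hfgk hfkg hkg
  have hpred := altStep_unique_pred (fg := fg) hfk.1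
  -- Switch from `fk` to `fg` where the path from `k` to `g` crosses from `hA ∈ G1` to `hB ∈ G2`.
  let S : Set M := {h | ReflTransGen (altStep fg fk) (.inr hB) (.inr h)}
  have hback (h : M) (hS : h ∈ S) (hne : h ≠ hB) :
      ReflTransGen (altStep fg fk) (.inr hB) (.inl (fg h)) :=
    hS.of_unique_pred_of_ne hpred (by simpa using hne) (altStep_inl_inr h)
  have hmix (h h' : M) (hS : h ∈ S) (hS' : h' ∉ S) (he : fg h = fk h') : h = hB ∧ h' = hA := by
    by_cases hhB : h = hB
    · subst hhB
      exact ⟨rfl, hfk.1 (he.symm.trans hAB.symm)⟩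
    · exact absurd ((hback h hS hhB).of_unique_pred_of_ne hpred (by simp)
        (he ▸ altStep_inr_inl h')) hS'
  refine hno _ (hfg.isShiftDirection_piecewise hfk hfgg hfkk (S := S)
    (fun h h' hS he => (hS.tail (altStep_inr_inl h)).tail (he ▸ altStep_inl_inr h'))
    (fun h hh h' _ hS hS' he => disjoint_left.1 hdisj ((hmix h h' hS hS' he).1 ▸ hh) hBG2)
    (fun h _ h' hh' hS hS' he => disjoint_left.1 hdisj hAG1 ((hmix h h' hS hS' he).2 ▸ hh'))
    (fun h hS he => ?_)
    (fun h he => hBg.of_unique_pred_of_ne hpred (by simp) (he ▸ altStep_inr_inl h)))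
  have hne : h ≠ hB := by
    rintro rfl
    exact hk hA (hAB.trans he)
  obtain hkB | ⟨v, -, hv⟩ := (hback h hS hne).cases_tail
  · simp at hkB
  · exact not_altStep_inl hk v (he ▸ hv)

end TwoColumns

theorem two_columns_structure_general
    {J M : Type*} [Fintype J] [Fintype M] [DecidableEq J] [DecidableEq M]
    (G1 G2 : Finset M)
    (hdisj : Disjoint G1 G2) (hcover : G1 ∪ G2 = Finset.univ)
    (b : J → M → ℕ) (a1 a2 : J → ℕ)
    (rstar wstar : ℝ)
    (y : J → M → ℝ) (x1 x2 : J → ℝ) (r w : ℝ)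
    (hfeas : FeasibleLP G1 G2 b a1 a2 rstar wstar y x1 x2 r w)
    (hopt : ∀ y' x1' x2' r' w',
      FeasibleLP G1 G2 b a1 a2 rstar wstar y' x1' x2' r' w' → r ≤ r')
    (ε : ℝ) (hε1 : ε < 1) (hrε : r = (⌊rstar⌋ : ℝ) + ε)
    (B1 B2 : Finset J)
    (hB1 : ∀ j, j ∈ B1 ↔ ¬∃ z : ℤ, x1 j = (z : ℝ))
    (hB2 : ∀ j, j ∈ B2 ↔ ¬∃ z : ℤ, x2 j = (z : ℝ))
    (cols : Finset (M → J)) (mult : (M → J) → ℝ)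
    (hrep : IsColRep y w cols mult)
    (g k : J) (hgk : g ≠ k) (hxg : 0 < x1 g) (hxk : 0 < x2 k)
    (fk fg : M → J) (hfk : fk ∈ cols) (hfg : fg ∈ cols)
    (hfkbar : ∀ h ∈ G1, fk h ≠ k) (hfgbar : ∀ h ∈ G2, fg h ≠ g)
    (hepsr : 0 < epsR B1 B2 x1 x2 r ε g k) :
    ((∃ h ∈ G2, fk h = k) ∧ (∃ h ∈ G2, fk h = g)) ∧
    ((∃ h ∈ G1, fg h = k) ∧ (∃ h ∈ G1, fg h = g)) ∧
    Relation.ReflTransGen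
      (fun v v' : J ⊕ M => ∃ h : M,
        (v = Sum.inl (fg h) ∧ v' = Sum.inr h) ∨
        (v = Sum.inr h ∧ v' = Sum.inl (fg h)) ∨
        (v = Sum.inl (fk h) ∧ v' = Sum.inr h) ∨
        (v = Sum.inr h ∧ v' = Sum.inl (fk h)))
      (Sum.inl k) (Sum.inl g) := by
  have hno := not_isShiftDirection hfeas hopt hε1 hrε hB1 hB2 hgk hxg hxk hepsr
  have hno' (f : M → J) : ¬ IsShiftDirection y w G2 G1 k g f := fun hf => hno f hf.symm
  have hfkc := (hrep.1 fk hfk).1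
  have hfgc := (hrep.1 fg hfg).1
  have hfkg := exists_right_eq_of_isColumn hno hfkc hfkbar
  have hfgk := exists_right_eq_of_isColumn hno' hfgc hfgbar
  have hconn := reflTransGen_symmGen_altStep hno hfgc hfkc hfgbar hfkbar
  have hconn' := reflTransGen_symmGen_altStep hno' hfkc hfgc hfkbar hfgbar
  refine ⟨⟨?_, hfkg⟩, ⟨hfgk, ?_⟩, ReflTransGen.mono (fun _ _ => symmGen_altStep_iff.1) _ _ hconn⟩
  · exact exists_right_eq_of_reflTransGen hdisj hcover hno hfgc hfkc hfgbar hfkbar hfgk hfkg hconn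
  · exact exists_right_eq_of_reflTransGen hdisj.symm (union_comm G1 G2 ▸ hcover) hno' hfkc hfgc
      hfkbar hfgbar hfkg hfgk hconn'

theorem two_columns_structure
    {J M : Type*} [Fintype J] [Fintype M] [DecidableEq J] [DecidableEq M]
    (G1 G2 : Finset M) (hG1ne : G1.Nonempty) (hG2ne : G2.Nonempty)
    (hdisj : Disjoint G1 G2) (hcover : G1 ∪ G2 = Finset.univ)
    (b : J → M → ℕ) (a1 a2 : J → ℕ)
    (ystar : J → M → ℝ) (x1star x2star : J → ℝ) (rstar wstar : ℝ)
    (hstar : FeasibleS G1 G2 b a1 a2 ystar x1star x2star rstar wstar)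
    (hstaropt : ∀ y' x1' x2' r' w', FeasibleS G1 G2 b a1 a2 y' x1' x2' r' w' →
      wstar - rstar ≤ w' - r')
    (y : J → M → ℝ) (x1 x2 : J → ℝ) (r w : ℝ)
    (hfeas : FeasibleLP G1 G2 b a1 a2 rstar wstar y x1 x2 r w)
    (hopt : ∀ y' x1' x2' r' w',
      FeasibleLP G1 G2 b a1 a2 rstar wstar y' x1' x2' r' w' → r ≤ r')
    (ε : ℝ) (hε0 : 0 < ε) (hε1 : ε < 1) (hrε : r = (⌊rstar⌋ : ℝ) + ε)
    (B1 B2 : Finset J)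
    (hB1 : ∀ j, j ∈ B1 ↔ ¬∃ z : ℤ, x1 j = (z : ℝ))
    (hB2 : ∀ j, j ∈ B2 ↔ ¬∃ z : ℤ, x2 j = (z : ℝ))
    (cols : Finset (M → J)) (mult : (M → J) → ℝ)
    (hrep : IsColRep y w cols mult)
    (g k : J) (hgk : g ≠ k) (hxg : 0 < x1 g) (hxk : 0 < x2 k)
    (fk fg : M → J) (hfk : fk ∈ cols) (hfg : fg ∈ cols)
    (hfkbar : ∀ h ∈ G1, fk h ≠ k) (hfgbar : ∀ h ∈ G2, fg h ≠ g)
    (hepsr : 0 < epsR B1 B2 x1 x2 r ε g k) :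
    ((∃ h ∈ G2, fk h = k) ∧ (∃ h ∈ G2, fk h = g)) ∧
    ((∃ h ∈ G1, fg h = k) ∧ (∃ h ∈ G1, fg h = g)) ∧
    Relation.ReflTransGen
      (fun v v' : J ⊕ M => ∃ h : M,
        (v = Sum.inl (fg h) ∧ v' = Sum.inr h) ∨
        (v = Sum.inr h ∧ v' = Sum.inl (fg h)) ∨
        (v = Sum.inl (fk h) ∧ v' = Sum.inr h) ∨
        (v = Sum.inr h ∧ v' = Sum.inl (fk h)))
      (Sum.inl k) (Sum.inl g) :=
  two_columns_structure_general G1 G2 hdisj hcover b a1 a2 rstar wstar y x1 x2 r w hfeas hopt ε hε1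
    hrε B1 B2 hB1 hB2 cols mult hrep g k hgk hxg hxk fk fg hfk hfg hfkbar hfgbar hepsr
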